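/- arXiv:2002.11553 — 4 statements merged into one kernel-verified Lean document; each statement's English description precedes it below -/
import Mathlib

section
/- For positive reals r, s, let h_{r,s}(x) = max(√r·x, s·x²) and I_{r,s}(x) = {v ≥ 0 : v ≤ max(r, s√v)·x}. Then for all x, y ≥ 0, sup I_{r,s}(x+y) ≤ (h_{r,s}(√x) + h_{r,s}(√y))². -/
theorem stmt_3 (r s : ℝ) (hr : 0 < r) (hs : 0 < s) (x y : ℝ) (hx : 0 ≤ x) (hy : 0 ≤ y) :
    sSup {v : ℝ | 0 ≤ v ∧ v ≤ max r (s * Real.sqrt v) * (x + y)} ≤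
      ((max (Real.sqrt r * Real.sqrt x) (s * Real.sqrt x ^ 2)) +
       (max (Real.sqrt r * Real.sqrt y) (s * Real.sqrt y ^ 2))) ^ 2 := by
  have hsx : Real.sqrt x ^ 2 = x := Real.sq_sqrt hx
  have hsy : Real.sqrt y ^ 2 = y := Real.sq_sqrt hy
  rw [hsx, hsy]
  set M : ℝ := max (Real.sqrt r * Real.sqrt x) (s * x) + max (Real.sqrt r * Real.sqrt y) (s * y)
    with hM
  have hM0 : 0 ≤ M := by
    apply add_nonneg <;> exact le_trans (by positivity) (le_max_left _ _)
  apply Real.sSup_le _ (by positivity)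
  rintro v ⟨hv0, hv⟩
  -- show sqrt v ≤ M, then v ≤ M^2
  have key : Real.sqrt v ≤ M := by
    rcases le_or_gt v (r * (x + y)) with h1 | h1
    · calc Real.sqrt v ≤ Real.sqrt (r * (x + y)) := Real.sqrt_le_sqrt h1
        _ = Real.sqrt r * Real.sqrt (x + y) := Real.sqrt_mul hr.le _
        _ ≤ Real.sqrt r * (Real.sqrt x + Real.sqrt y) := by
            have hsub : x + y ≤ (Real.sqrt x + Real.sqrt y) ^ 2 := by
              nlinarith [Real.sq_sqrt hx, Real.sq_sqrt hy,
                mul_nonneg (Real.sqrt_nonneg x) (Real.sqrt_nonneg y)]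
            have h := Real.sqrt_le_sqrt hsub
            rw [Real.sqrt_sq (by positivity)] at h
            exact mul_le_mul_of_nonneg_left h (Real.sqrt_nonneg r)
        _ = Real.sqrt r * Real.sqrt x + Real.sqrt r * Real.sqrt y := by ring
        _ ≤ M := add_le_add (le_max_left _ _) (le_max_left _ _)
    · -- then v ≤ s * sqrt v * (x + y)
      have h2 : v ≤ s * Real.sqrt v * (x + y) := by
        rcases max_choice r (s * Real.sqrt v) with he | he <;> rw [he] at hv
        · linarith
        · exact hv
      rcases eq_or_lt_of_le hv0 with h0 | h0
      · simp [← h0, hM0]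
      · have hsv : 0 < Real.sqrt v := Real.sqrt_pos.mpr h0
        have : Real.sqrt v * Real.sqrt v ≤ s * Real.sqrt v * (x + y) := by
          rw [Real.mul_self_sqrt hv0]; exact h2
          
        have := le_of_mul_le_mul_right (by
          calc Real.sqrt v * Real.sqrt v ≤ s * Real.sqrt v * (x + y) := this
            _ = (s * (x + y)) * Real.sqrt v := by ring) hsv
        calc Real.sqrt v ≤ s * (x + y) := this
          _ = s * x + s * y := by ring
          _ ≤ M := add_le_add (le_max_right _ _) (le_max_right _ _)
  calc v = Real.sqrt v ^ 2 := (Real.sq_sqrt hv0).symm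
    _ ≤ M ^ 2 := by exact pow_le_pow_left₀ (Real.sqrt_nonneg v) key 2
end

section
/- Let g: ℝ → ℝ be convex, differentiable, minimized at s, and suppose there exists η > 0 and c > 0 such that |g'(u)| ≥ η|u − s| for all u with |u − s| ≤ c/2. Then for all u, v ∈ ℝ: (u−v)² ≤ max(4/η, (8/(cη))·|u−v|) · (g(u) + g(v) − 2g(s)). -/
-- Lemma A: quadratic growth near s
theorem keyA (g : ℝ → ℝ) (s η c : ℝ) (hη : 0 < η) (hc : 0 < c)
    (hconv : ConvexOn ℝ Set.univ g) (hdiff : Differentiable ℝ g)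
    (hmin : ∀ u, g s ≤ g u)
    (hgrad : ∀ u, |u - s| ≤ c / 2 → η * |u - s| ≤ |deriv g u|) :
    ∀ u, |u - s| ≤ c / 2 → η / 2 * (u - s) ^ 2 ≤ g u - g s := by
  have hmono : Monotone (deriv g) := by
    have := hconv.monotoneOn_deriv (fun x _ => hdiff x)
    intro a b hab
    exact this (Set.mem_univ a) (Set.mem_univ b) hab
  have hds : deriv g s = 0 := by
    have : IsLocalMin g s := Filter.Eventually.of_forall hmin
    exact this.deriv_eq_zero
  have hint : ∀ a b : ℝ, IntervalIntegrable (deriv g) MeasureTheory.volume a b :=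
    fun a b => hmono.intervalIntegrable
  intro u hu
  rcases le_total s u with h | h
  · -- u ≥ s
    have habs : |u - s| = u - s := abs_of_nonneg (by linarith)
    have hptw : ∀ t ∈ Set.Icc s u, η * (t - s) ≤ deriv g t := by
      intro t ht
      have hts : 0 ≤ t - s := by linarith [ht.1]
      have h1 : |t - s| ≤ c / 2 := by rw [abs_of_nonneg hts]; rw [habs] at hu; linarith [ht.2]
      have h2 := hgrad t h1
      have h3 : 0 ≤ deriv g t := hds ▸ hmono ht.1
      rw [abs_of_nonneg hts, abs_of_nonneg h3] at h2
      exact h2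
    have heq : ∫ t in s..u, deriv g t = g u - g s :=
      intervalIntegral.integral_deriv_eq_sub (fun t _ => hdiff t) (hint s u)
    have hcomp : ∫ t in s..u, η * (t - s) ≤ ∫ t in s..u, deriv g t := by
      apply intervalIntegral.integral_mono_on h _ (hint s u) hptw
      apply Continuous.intervalIntegrable; continuity
    have hval : ∫ t in s..u, η * (t - s) = η / 2 * (u - s) ^ 2 := by
      have : ∫ t in s..u, η * (t - s) = η * ∫ t in s..u, (t - s) := by
        rw [intervalIntegral.integral_const_mul]
      rw [this, intervalIntegral.integral_sub (Continuous.intervalIntegrable (by continuity) _ _)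
        intervalIntegrable_const, integral_id, intervalIntegral.integral_const]
      simp only [smul_eq_mul]
      ring
    rw [← hval, ← heq] at *
    linarith
  · -- u ≤ s
    have habs : |u - s| = s - u := by rw [abs_sub_comm]; exact abs_of_nonneg (by linarith)
    have hptw : ∀ t ∈ Set.Icc u s, deriv g t ≤ η * (t - s) := by
      intro t ht
      have hts : t - s ≤ 0 := by linarith [ht.2]
      have h1 : |t - s| ≤ c / 2 := by
        rw [abs_sub_comm, abs_of_nonneg (by linarith)]; rw [habs] at hu; linarith [ht.1]
      have h2 := hgrad t h1
      have h3 : deriv g t ≤ 0 := hds ▸ hmono ht.2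
      rw [abs_of_nonpos hts, abs_of_nonpos h3] at h2
      linarith
    have heq : ∫ t in u..s, deriv g t = g s - g u :=
      intervalIntegral.integral_deriv_eq_sub (fun t _ => hdiff t) (hint u s)
    have hcomp : ∫ t in u..s, deriv g t ≤ ∫ t in u..s, η * (t - s) := by
      apply intervalIntegral.integral_mono_on h (hint u s) _ hptw
      apply Continuous.intervalIntegrable; continuity
    have hval : ∫ t in u..s, η * (t - s) = - (η / 2 * (u - s) ^ 2) := by
      have : ∫ t in u..s, η * (t - s) = η * ∫ t in u..s, (t - s) := by
        rw [intervalIntegral.integral_const_mul]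
      rw [this, intervalIntegral.integral_sub (Continuous.intervalIntegrable (by continuity) _ _)
        intervalIntegrable_const, integral_id, intervalIntegral.integral_const]
      simp only [smul_eq_mul]
      ring
    rw [hval, heq] at hcomp
    linarith

-- Lemma B: linear growth far from s
theorem keyB (g : ℝ → ℝ) (s η c : ℝ) (hη : 0 < η) (hc : 0 < c)
    (hconv : ConvexOn ℝ Set.univ g) (hdiff : Differentiable ℝ g)
    (hmin : ∀ u, g s ≤ g u)
    (hgrad : ∀ u, |u - s| ≤ c / 2 → η * |u - s| ≤ |deriv g u|) :
    ∀ u, c / 2 ≤ |u - s| → η * c / 4 * |u - s| ≤ g u - g s := by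
  have hA := keyA g s η c hη hc hconv hdiff hmin hgrad
  intro u hu
  rcases le_total s u with h | h
  · have habs : |u - s| = u - s := abs_of_nonneg (by linarith)
    rw [habs] at hu ⊢
    have hus : 0 < u - s := by linarith
    set t : ℝ := (c / 2) / (u - s) with hT
    have ht0 : 0 < t := by positivity
    have ht : t * (u - s) = c / 2 := div_mul_cancel₀ _ (ne_of_gt hus)
    have ht1 : t ≤ 1 := by rw [hT, div_le_one hus]; linarith
    have hcvx := hconv.2 (Set.mem_univ s) (Set.mem_univ u) (by linarith : (0:ℝ) ≤ 1 - t)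
      ht0.le (by ring)
    simp only [smul_eq_mul] at hcvx
    have hw : (1 - t) * s + t * u = s + c / 2 := by nlinarith [ht]
    rw [hw] at hcvx
    have hAw : η / 2 * (c / 2) ^ 2 ≤ g (s + c / 2) - g s := by
      have := hA (s + c / 2) (by
        rw [show s + c / 2 - s = c / 2 by ring, abs_of_nonneg (by linarith : (0:ℝ) ≤ c / 2)])
      rwa [show s + c / 2 - s = c / 2 by ring] at this
    have hgu : 0 ≤ g u - g s := by linarith [hmin u]
    -- t * (g u - g s) ≥ g(s+c/2) - g s ≥ η c^2/8
    have h1 : η / 2 * (c / 2) ^ 2 ≤ t * (g u - g s) := by nlinarith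
    nlinarith [mul_le_mul_of_nonneg_right h1 hus.le, ht]
  · have habs : |u - s| = s - u := by rw [abs_sub_comm]; exact abs_of_nonneg (by linarith)
    rw [habs] at hu ⊢
    have hus : 0 < s - u := by linarith
    set t : ℝ := (c / 2) / (s - u) with hT
    have ht0 : 0 < t := by positivity
    have ht : t * (s - u) = c / 2 := div_mul_cancel₀ _ (ne_of_gt hus)
    have ht1 : t ≤ 1 := by rw [hT, div_le_one hus]; linarith
    have hcvx := hconv.2 (Set.mem_univ s) (Set.mem_univ u) (by linarith : (0:ℝ) ≤ 1 - t)
      ht0.le (by ring)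
    simp only [smul_eq_mul] at hcvx
    have hw : (1 - t) * s + t * u = s - c / 2 := by nlinarith [ht]
    rw [hw] at hcvx
    have hAw : η / 2 * (c / 2) ^ 2 ≤ g (s - c / 2) - g s := by
      have := hA (s - c / 2) (by
        rw [show s - c / 2 - s = -(c / 2) by ring, abs_neg,
          abs_of_nonneg (by linarith : (0:ℝ) ≤ c / 2)])
      rwa [show s - c / 2 - s = -(c / 2) by ring, neg_sq] at this
    have hgu : 0 ≤ g u - g s := by linarith [hmin u]
    have h1 : η / 2 * (c / 2) ^ 2 ≤ t * (g u - g s) := by nlinarith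
    nlinarith [mul_le_mul_of_nonneg_right h1 hus.le, ht]

theorem stmt_5 (g : ℝ → ℝ) (s η c : ℝ) (hη : 0 < η) (hη1 : η ≤ 1) (hc : 0 < c)
    (hconv : ConvexOn ℝ Set.univ g) (hdiff : Differentiable ℝ g)
    (hmin : ∀ u, g s ≤ g u)
    (hgrad : ∀ u, |u - s| ≤ c / 2 → η * |u - s| ≤ |deriv g u|) :
    ∀ u v : ℝ,
      (u - v) ^ 2 ≤ max (4 / η) (8 / (c * η) * |u - v|) * (g u + g v - 2 * g s) := by
  have hA := keyA g s η c hη hc hconv hdiff hmin hgrad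
  have hB := keyB g s η c hη hc hconv hdiff hmin hgrad
  have hcase : ∀ x y : ℝ, c / 2 ≤ |x - s| → |y - s| ≤ |x - s| →
      (x - y) ^ 2 ≤ max (4 / η) (8 / (c * η) * |x - y|) * (g x + g y - 2 * g s) := by
    intro x y hx hxy
    have hD : 0 ≤ g x + g y - 2 * g s := by linarith [hmin x, hmin y]
    have hBx := hB x hx
    have habs : |x - y| ≤ 2 * |x - s| := by
      calc |x - y| ≤ |x - s| + |s - y| := abs_sub_le x s y
        _ ≤ 2 * |x - s| := by rw [abs_sub_comm s y]; linarith
    have hDx : η * c / 4 * |x - s| ≤ g x + g y - 2 * g s := by linarith [hmin y]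
    have step : (x - y) ^ 2 ≤ 8 / (c * η) * |x - y| * (g x + g y - 2 * g s) := by
      calc (x - y) ^ 2 = |x - y| * |x - y| := by rw [← sq_abs]; ring
        _ ≤ |x - y| * (2 * |x - s|) :=
            mul_le_mul_of_nonneg_left habs (abs_nonneg _)
        _ = 8 / (c * η) * |x - y| * (η * c / 4 * |x - s|) := by
            field_simp; ring
        _ ≤ 8 / (c * η) * |x - y| * (g x + g y - 2 * g s) := by
            apply mul_le_mul_of_nonneg_left hDx; positivity
    exact step.trans (mul_le_mul_of_nonneg_right (le_max_right _ _) hD)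
  intro u v
  by_cases hsmall : |u - s| ≤ c / 2 ∧ |v - s| ≤ c / 2
  · obtain ⟨h1, h2⟩ := hsmall
    have hD : 0 ≤ g u + g v - 2 * g s := by linarith [hmin u, hmin v]
    have hAu := hA u h1
    have hAv := hA v h2
    have h4 : (u - v) ^ 2 ≤ 4 / η * (g u + g v - 2 * g s) := by
      rw [div_mul_eq_mul_div, le_div_iff₀ hη]
      nlinarith [sq_nonneg (u + v - 2 * s)]
    exact h4.trans (mul_le_mul_of_nonneg_right (le_max_left _ _) hD)
  · rcases le_total (|v - s|) (|u - s|) with h | h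
    · have hx : c / 2 ≤ |u - s| := by
        by_contra hcon
        exact hsmall ⟨le_of_not_ge hcon, h.trans (le_of_not_ge hcon)⟩
      exact hcase u v hx h
    · have hx : c / 2 ≤ |v - s| := by
        by_contra hcon
        exact hsmall ⟨h.trans (le_of_not_ge hcon), le_of_not_ge hcon⟩
      have := hcase v u hx h
      rw [abs_sub_comm v u] at this
      calc (u - v) ^ 2 = (v - u) ^ 2 := by ring
        _ ≤ max (4 / η) (8 / (c * η) * |u - v|) * (g v + g u - 2 * g s) := this
        _ = max (4 / η) (8 / (c * η) * |u - v|) * (g u + g v - 2 * g s) := by ring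
end

section
/- Let Y be a real random variable, c > 0, η > 0, s a minimizer of L(u) = E[φ_c(Y − u)], and assume P(|Y − s| ≤ c/2) ≥ η. Then for all u ∈ [s − c/2, s + c/2], |L'(u)| ≥ η|u − s|. -/
open MeasureTheory

theorem stmt_7 {Ω : Type*} [MeasurableSpace Ω] (μ : Measure Ω) [IsProbabilityMeasure μ]
    (Y : Ω → ℝ) (hY : Integrable Y μ) (c η : ℝ) (hc : 0 < c) (hη : 0 < η)
    (L : ℝ → ℝ)
    (hL : ∀ u : ℝ, L u =
      ∫ ω, (if |Y ω - u| ≤ c then (Y ω - u) ^ 2 / 2 else c * (|Y ω - u| - c / 2)) ∂μ)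
    (s : ℝ) (hmin : ∀ u : ℝ, L s ≤ L u)
    (hmass : η ≤ (μ {ω | |Y ω - s| ≤ c / 2}).toReal)
    (hderiv : ∀ u : ℝ,
      HasDerivAt L (-(∫ ω, Real.sign (Y ω - u) * min |Y ω - u| c ∂μ)) u)
    (hderiv2 : ∀ u ∈ Set.Icc (s - c / 2) (s + c / 2),
      HasDerivAt (deriv L) ((μ {ω | |Y ω - u| ≤ c}).toReal) u) :
    ∀ u ∈ Set.Icc (s - c / 2) (s + c / 2), η * |u - s| ≤ |deriv L u| := by
  have hs0 : deriv L s = 0 := by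
    have hloc : IsLocalMin L s := Filter.Eventually.of_forall hmin
    exact hloc.deriv_eq_zero
  have hsmem : s ∈ Set.Icc (s - c / 2) (s + c / 2) := by
    constructor <;> linarith
  -- lower bound on second derivative on the interval
  have hkey : ∀ u ∈ Set.Icc (s - c / 2) (s + c / 2),
      η ≤ (μ {ω | |Y ω - u| ≤ c}).toReal := by
    intro u hu
    refine hmass.trans (ENNReal.toReal_mono (measure_ne_top μ _) (measure_mono ?_))
    intro ω hω
    simp only [Set.mem_setOf_eq] at hω ⊢
    have h1 : |s - u| ≤ c / 2 := by
      rw [abs_sub_le_iff]; constructor <;> [linarith [hu.1]; linarith [hu.2]]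
    calc |Y ω - u| = |(Y ω - s) + (s - u)| := by ring_nf
      _ ≤ |Y ω - s| + |s - u| := abs_add_le _ _
      _ ≤ c / 2 + c / 2 := add_le_add hω h1
      _ = c := by ring
  -- g = deriv L - η * id is monotone on the interval
  set g : ℝ → ℝ := fun x => deriv L x - η * x with hg
  have hgderiv : ∀ x ∈ Set.Icc (s - c / 2) (s + c / 2),
      HasDerivAt g ((μ {ω | |Y ω - x| ≤ c}).toReal - η) x := by
    intro x hx
    exact (hderiv2 x hx).sub (by simpa using (hasDerivAt_id x).const_mul η)
  have hmono : MonotoneOn g (Set.Icc (s - c / 2) (s + c / 2)) := by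
    apply monotoneOn_of_deriv_nonneg (convex_Icc _ _)
    · intro x hx
      exact ((hgderiv x hx).continuousAt).continuousWithinAt
    · intro x hx
      exact ((hgderiv x (interior_subset hx)).differentiableAt).differentiableWithinAt
    · intro x hx
      have hx' := interior_subset hx
      rw [(hgderiv x hx').deriv]
      linarith [hkey x hx']
  intro u hu
  rcases le_total s u with hsu | hus
  · have := hmono hsmem hu hsu
    simp only [hg, hs0] at this
    have hd : η * (u - s) ≤ deriv L u := by linarith
    rw [abs_of_nonneg (by linarith : (0:ℝ) ≤ u - s)]
    calc η * (u - s) ≤ deriv L u := hd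
      _ ≤ |deriv L u| := le_abs_self _
  · have := hmono hu hsmem hus
    simp only [hg, hs0] at this
    have hd : deriv L u ≤ -(η * (s - u)) := by linarith
    rw [abs_of_nonpos (by linarith : u - s ≤ 0)]
    have : η * (s - u) ≤ -(deriv L u) := by linarith
    calc η * -(u - s) = η * (s - u) := by ring
      _ ≤ -(deriv L u) := this
      _ ≤ |deriv L u| := neg_le_abs _
end

section
/- Let g: ℝ → ℝ be convex and differentiable with g' non-decreasing, and let b̂_k, b̂_l and vectors witness the following: if there exists b > 0 such that b̂_k + b + a_i ≤ b̂_l + a'_i for finitely many reals (a_i), (a'_i) with ∑_i g'(y_i − b̂_k − a_i) = 0 and ∑_i g'(y_i − b̂_l − a'_i) = 0, then for all ε ∈ [0, b/2], ∑_i g'(y_i − b̂_k − ε − a_i) = 0 and ∑_i g'(y_i − b̂_l + ε − a'_i) = 0. -/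
theorem stmt_17 (g : ℝ → ℝ) (hconv : ConvexOn ℝ Set.univ g)
    (hdiff : Differentiable ℝ g) (hmono : Monotone (deriv g))
    (n : ℕ) (y a a' : Fin n → ℝ) (bk bl : ℝ) (b : ℝ) (hb : 0 < b)
    (horder : ∀ i, bk + b + a i ≤ bl + a' i)
    (hsumk : ∑ i, deriv g (y i - bk - a i) = 0)
    (hsuml : ∑ i, deriv g (y i - bl - a' i) = 0) :
    ∀ ε ∈ Set.Icc (0 : ℝ) (b / 2),
      (∑ i, deriv g (y i - bk - ε - a i) = 0) ∧
      (∑ i, deriv g (y i - bl + ε - a' i) = 0) := by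
  rintro ε ⟨hε0, hεb⟩
  constructor
  · have h1 : ∑ i, deriv g (y i - bk - ε - a i) ≤ ∑ i, deriv g (y i - bk - a i) :=
      Finset.sum_le_sum fun i _ => hmono (by linarith)
    have h2 : ∑ i, deriv g (y i - bl - a' i) ≤ ∑ i, deriv g (y i - bk - ε - a i) :=
      Finset.sum_le_sum fun i _ => hmono (by have := horder i; linarith)
    linarith
  · have h1 : ∑ i, deriv g (y i - bl + ε - a' i) ≤ ∑ i, deriv g (y i - bk - a i) :=
      Finset.sum_le_sum fun i _ => hmono (by have := horder i; linarith)
    have h2 : ∑ i, deriv g (y i - bl - a' i) ≤ ∑ i, deriv g (y i - bl + ε - a' i) :=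
      Finset.sum_le_sum fun i _ => hmono (by linarith)
    linarith
end
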